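/- arXiv:2502.09514 — 2 statements merged into one kernel-verified Lean document; each statement's English description precedes it below -/
import Mathlib

section
/- Analytic core of the quantum Cohn–Elkies bound (Theorem 1): Let N ≥ 1 be an integer, d > 0, c > 0, and M ∈ ℝ. Let a, f : ℝ^{2N} → ℝ be even integrable functions with a(x) ≥ 0 for all x. Assume: (i) â(x) ≥ 0 for all x ∈ ℝ^{2N}; (ii) c·â(x) ≤ a(x) whenever ‖x‖ < d; (iii) f̂(x) ≥ 0 for all x ∈ ℝ^{2N}; (iv) f(x) ≥ 0 whenever ‖x‖ < d and f(x) ≤ 0 whenever ‖x‖ ≥ d; (v) ∫_{‖x‖<d} f̂(x)·a(x) dx > 0; (vi) f(x) ≤ M·f̂(x) for all x with ‖x‖ ≤ d. Then c ≤ M. -/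
open MeasureTheory Real
open scoped RealInnerProductSpace

/-- The Fourier transform of an even integrable function `h : ℝ^{2N} → ℝ`,
`ĥ(y) = (2π)^{-N} ∫ cos⟨y,x⟩ h(x) dx`. -/
noncomputable def fourierCos (N : ℕ) (h : EuclideanSpace ℝ (Fin (2 * N)) → ℝ)
    (y : EuclideanSpace ℝ (Fin (2 * N))) : ℝ :=
  (1 / (2 * π) ^ N) * ∫ x : EuclideanSpace ℝ (Fin (2 * N)), Real.cos ⟪y, x⟫ * h x

/-!
With `S = {‖x‖ < d}` and `J = ∫_S f̂ â`, the chain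
`c J ≤ ∫_S f̂ a ≤ ∫ f̂ a = ∫ f â ≤ ∫_S f â ≤ M J`
uses only the sign conditions, except for the middle equality, which is Fubini together with the
symmetry of the kernel `cos⟪y, x⟫`. Since `0 < ∫_S f̂ a ≤ M J` forces `J > 0`, dividing gives
`c ≤ M`.
-/

theorem Real.abs_cos_mul_le (θ r : ℝ) : |cos θ * r| ≤ |r| := by
  simpa [abs_mul] using mul_le_mul_of_nonneg_right (abs_cos_le_one θ) (abs_nonneg r)

namespace MeasureTheory

theorem integral_le_setIntegral_of_nonpos_compl {X : Type*} [MeasurableSpace X] {μ : Measure X}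
    {f : X → ℝ} {s : Set X} (hs : MeasurableSet s) (hf : Integrable f μ)
    (hf_compl : ∀ x ∉ s, f x ≤ 0) :
    ∫ x, f x ∂μ ≤ ∫ x in s, f x ∂μ := by
  rw [← integral_add_compl hs hf]
  linarith [setIntegral_nonpos (μ := μ) hs.compl hf_compl]

theorem le_of_integral_mul_eq_integral_mul {X : Type*} [MeasurableSpace X] {μ : Measure X}
    {s : Set X} (hs : MeasurableSet s) {a A f F : X → ℝ} {c M : ℝ}
    (hFa : Integrable (fun x => F x * a x) μ) (hfA : Integrable (fun x => f x * A x) μ)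
    (hFA : IntegrableOn (fun x => F x * A x) s μ)
    (h_swap : ∫ x, F x * a x ∂μ = ∫ x, f x * A x ∂μ)
    (ha : ∀ x, 0 ≤ a x) (hA : ∀ x, 0 ≤ A x) (hF : ∀ x, 0 ≤ F x)
    (hcA : ∀ x ∈ s, c * A x ≤ a x) (hf_compl : ∀ x ∉ s, f x ≤ 0) (hfM : ∀ x ∈ s, f x ≤ M * F x)
    (h_pos : 0 < ∫ x in s, F x * a x ∂μ) :
    c ≤ M := by
  set J := ∫ x in s, F x * A x ∂μ
  have h_lower : c * J ≤ ∫ x in s, F x * a x ∂μ := by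
    rw [← integral_const_mul]
    refine setIntegral_mono_on (hFA.const_mul c) hFa.integrableOn hs fun x hx => ?_
    rw [mul_left_comm]
    exact mul_le_mul_of_nonneg_left (hcA x hx) (hF x)
  have h_upper : ∫ x in s, F x * a x ∂μ ≤ M * J :=
    calc ∫ x in s, F x * a x ∂μ
        ≤ ∫ x, F x * a x ∂μ :=
          setIntegral_le_integral hFa (ae_of_all _ fun x => mul_nonneg (hF x) (ha x))
      _ = ∫ x, f x * A x ∂μ := h_swap
      _ ≤ ∫ x in s, f x * A x ∂μ :=
          integral_le_setIntegral_of_nonpos_compl hs hfA fun x hx =>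
            mul_nonpos_of_nonpos_of_nonneg (hf_compl x hx) (hA x)
      _ ≤ M * J := by
          rw [← integral_const_mul]
          refine setIntegral_mono_on hfA.integrableOn (hFA.const_mul M) hs fun x hx => ?_
          rw [← mul_assoc]
          exact mul_le_mul_of_nonneg_right (hfM x hx) (hA x)
  have hJ_pos : 0 < J := by
    refine (setIntegral_nonneg hs fun x _ => mul_nonneg (hF x) (hA x)).lt_of_ne fun hJ => ?_
    rw [show J = 0 from hJ.symm, mul_zero] at h_upper
    exact (not_lt.2 h_upper) h_pos
  exact le_of_mul_le_mul_right (h_lower.trans h_upper) hJ_pos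

variable {E : Type*} [NormedAddCommGroup E] [InnerProductSpace ℝ E] [MeasurableSpace E]
  {μ : Measure E}

noncomputable def cosTransform (μ : Measure E) (h : E → ℝ) (y : E) : ℝ :=
  ∫ x, cos ⟪y, x⟫ * h x ∂μ

theorem abs_cosTransform_le {h : E → ℝ} (hh : Integrable h μ) (y : E) :
    |cosTransform μ h y| ≤ ∫ x, |h x| ∂μ :=
  abs_integral_le_integral_abs.trans <|
    integral_mono_of_nonneg (ae_of_all _ fun _ => abs_nonneg _) hh.abs
      (ae_of_all _ fun _ => abs_cos_mul_le _ _)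

variable [OpensMeasurableSpace E]

theorem continuous_cosTransform {h : E → ℝ} (hh : Integrable h μ) :
    Continuous (cosTransform μ h) :=
  continuous_of_dominated
    (fun _ => (continuous_cos.comp (continuous_const.inner continuous_id)).aestronglyMeasurable.mul
      hh.1)
    (fun _ => ae_of_all _ fun _ => abs_cos_mul_le _ _) hh.abs
    (ae_of_all _ fun _ => (continuous_cos.comp (continuous_id.inner continuous_const)).mul
      continuous_const)

theorem integrable_cosTransform_mul {f g : E → ℝ} (hf : Integrable f μ) (hg : Integrable g μ) :
    Integrable (fun y => cosTransform μ f y * g y) μ :=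
  hg.bdd_mul (continuous_cosTransform hf).aestronglyMeasurable
    (ae_of_all _ (abs_cosTransform_le hf))

theorem integral_cosTransform_mul [SecondCountableTopology E] [SFinite μ] {f g : E → ℝ}
    (hf : Integrable f μ) (hg : Integrable g μ) :
    ∫ y, cosTransform μ f y * g y ∂μ = ∫ x, f x * cosTransform μ g x ∂μ := by
  have hkernel : Integrable (fun z : E × E => cos ⟪z.1, z.2⟫ * (g z.1 * f z.2)) (μ.prod μ) :=
    (hg.mul_prod hf).bdd_mul
      (continuous_cos.comp (continuous_fst.inner continuous_snd)).aestronglyMeasurable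
      (ae_of_all _ fun z => abs_cos_le_one _)
  calc ∫ y, cosTransform μ f y * g y ∂μ = ∫ y, ∫ x, cos ⟪y, x⟫ * (g y * f x) ∂μ ∂μ := by
        simp only [cosTransform, ← integral_mul_const]
        congr 1; ext y; congr 1; ext x
        ring
    _ = ∫ x, ∫ y, cos ⟪y, x⟫ * (g y * f x) ∂μ ∂μ := integral_integral_swap hkernel
    _ = ∫ x, f x * cosTransform μ g x ∂μ := by
        simp only [cosTransform, ← integral_const_mul]
        congr 1; ext x; congr 1; ext y
        rw [real_inner_comm]
        ring

end MeasureTheory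

theorem fourierCos_eq_mul_cosTransform (N : ℕ) (h : EuclideanSpace ℝ (Fin (2 * N)) → ℝ) :
    fourierCos N h = fun y => 1 / (2 * π) ^ N * cosTransform volume h y :=
  rfl

section fourierCos

variable {N : ℕ} {f g : EuclideanSpace ℝ (Fin (2 * N)) → ℝ}

theorem continuous_fourierCos (hf : Integrable f) : Continuous (fourierCos N f) :=
  continuous_const.mul (continuous_cosTransform hf)

theorem integrable_fourierCos_mul (hf : Integrable f) (hg : Integrable g) :
    Integrable (fun y => fourierCos N f y * g y) := by
  simpa only [fourierCos_eq_mul_cosTransform, mul_assoc] using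
    (integrable_cosTransform_mul hf hg).const_mul (1 / (2 * π) ^ N)

theorem integral_fourierCos_mul (hf : Integrable f) (hg : Integrable g) :
    ∫ y, fourierCos N f y * g y = ∫ x, f x * fourierCos N g x := by
  simp only [fourierCos_eq_mul_cosTransform, mul_assoc, mul_left_comm (f _), integral_const_mul,
    integral_cosTransform_mul hf hg]

end fourierCos

theorem quantum_cohn_elkies_general (N : ℕ) (d c M : ℝ)
    (a f : EuclideanSpace ℝ (Fin (2 * N)) → ℝ)
    (ha_int : Integrable a) (hf_int : Integrable f)
    (ha_nonneg : ∀ x, 0 ≤ a x)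
    (ha_hat_nonneg : ∀ x, 0 ≤ fourierCos N a x)
    (h_code : ∀ x, ‖x‖ < d → c * fourierCos N a x ≤ a x)
    (hf_hat_nonneg : ∀ x, 0 ≤ fourierCos N f x)
    (hf_neg : ∀ x, d ≤ ‖x‖ → f x ≤ 0)
    (h_int_pos :
      0 < ∫ x in {x : EuclideanSpace ℝ (Fin (2 * N)) | ‖x‖ < d}, fourierCos N f x * a x)
    (hM : ∀ x, ‖x‖ ≤ d → f x ≤ M * fourierCos N f x) :
    c ≤ M := by
  have h_hats_int : IntegrableOn (fun x => fourierCos N f x * fourierCos N a x) {x | ‖x‖ < d} :=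
    ((continuous_fourierCos hf_int).mul (continuous_fourierCos ha_int)).locallyIntegrable
      |>.integrableOn_isCompact (isCompact_closedBall 0 d)
      |>.mono_set fun x hx => mem_closedBall_zero_iff.2 (le_of_lt hx)
  have hfa_int : Integrable (fun x => f x * fourierCos N a x) := by
    simpa only [mul_comm] using integrable_fourierCos_mul ha_int hf_int
  exact le_of_integral_mul_eq_integral_mul
    (measurableSet_lt continuous_norm.measurable measurable_const)
    (integrable_fourierCos_mul hf_int ha_int) hfa_int h_hats_int
    (integral_fourierCos_mul hf_int ha_int) ha_nonneg ha_hat_nonneg hf_hat_nonneg h_code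
    (fun x hx => hf_neg x (not_lt.1 hx)) (fun x hx => hM x (le_of_lt hx)) h_int_pos

/-- Analytic core of the quantum Cohn–Elkies bound (Theorem 1). -/
theorem quantum_cohn_elkies (N : ℕ) (hN : 1 ≤ N) (d c M : ℝ) (hd : 0 < d) (hc : 0 < c)
    (a f : EuclideanSpace ℝ (Fin (2 * N)) → ℝ)
    (ha_even : ∀ x, a (-x) = a x) (hf_even : ∀ x, f (-x) = f x)
    (ha_int : Integrable a) (hf_int : Integrable f)
    (ha_nonneg : ∀ x, 0 ≤ a x)
    (ha_hat_nonneg : ∀ x, 0 ≤ fourierCos N a x)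
    (h_code : ∀ x, ‖x‖ < d → c * fourierCos N a x ≤ a x)
    (hf_hat_nonneg : ∀ x, 0 ≤ fourierCos N f x)
    (hf_pos : ∀ x, ‖x‖ < d → 0 ≤ f x)
    (hf_neg : ∀ x, d ≤ ‖x‖ → f x ≤ 0)
    (h_int_pos :
      0 < ∫ x in {x : EuclideanSpace ℝ (Fin (2 * N)) | ‖x‖ < d}, fourierCos N f x * a x)
    (hM : ∀ x, ‖x‖ ≤ d → f x ≤ M * fourierCos N f x) :
    c ≤ M :=
  quantum_cohn_elkies_general N d c M a f ha_int hf_int ha_nonneg ha_hat_nonneg h_code hf_hat_nonneg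
    hf_neg h_int_pos hM
end

section
/- The N = 1/2 Levenshtein supremum inequality (Appendix D): For every real d with 0 < d ≤ (12π)^{1/6} and every real x with 0 < x < d, one has sin²(πx/d) / ((πx/d)²·(1 − (x/d)²)) ≤ 1 + (sin(d·x) − d·x)/(2π). Equivalently, the quotient f(x/d)/f̂(xd) of the one-dimensional Levenshtein function f(x) = sin²(πx)/(π²x²(1−x²)) and its Fourier transform f̂(x) = (4π + 2 sin x − 2x)/(4√(2π³)) for x < 2π attains its supremum over [0,d] at x = 0. -/
/-!
Put `t = x / d ∈ (0, 1)`. Truncating Euler's product `sin (π t) = π t ∏ (1 - t² / n²)` after its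
first factor gives `sin (π t) ≤ π t (1 - t²)`, so the left-hand side is at most `1 - t²`.
On the other side `d x - sin (d x) ≤ (d x)³ / 6 = d⁵ x · t² / 6 ≤ d⁶ t² / 6`, and `d⁶ ≤ 12 π`
makes this at most `2 π t²`, so the right-hand side is at least `1 - t²`.
-/

open Real Filter

namespace Real

theorem sin_pi_mul_le_mul_one_sub_sq {t : ℝ} (ht₀ : 0 ≤ t) (ht₁ : t ≤ 1) :
    sin (π * t) ≤ π * t * (1 - t ^ 2) := by
  have hfactor : ∀ j : ℕ, 1 - t ^ 2 / ((j : ℝ) + 1) ^ 2 ∈ Set.Icc (0 : ℝ) 1 := fun j => by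
    have hsq : t ^ 2 ≤ ((j : ℝ) + 1) ^ 2 :=
      pow_le_pow_left₀ ht₀ (by linarith [j.cast_nonneg (α := ℝ)]) 2
    constructor
    · rw [sub_nonneg]; exact div_le_one_of_le₀ hsq (by positivity)
    · rw [sub_le_self_iff]; positivity
  have hpartial : ∀ n : ℕ, π * t * ∏ j ∈ Finset.range (n + 1), (1 - t ^ 2 / ((j : ℝ) + 1) ^ 2) ≤
      π * t * (1 - t ^ 2) := by
    intro n
    rw [Finset.prod_range_succ']
    have htail : ∏ j ∈ Finset.range n, (1 - t ^ 2 / (((j + 1 : ℕ) : ℝ) + 1) ^ 2) ≤ 1 :=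
      Finset.prod_le_one (fun j _ => (hfactor _).1) (fun j _ => (hfactor _).2)
    have hfirst := hfactor 0
    simp only [Nat.cast_zero, zero_add, one_pow, div_one] at hfirst ⊢
    exact mul_le_mul_of_nonneg_left (mul_le_of_le_one_left hfirst.1 htail) (by positivity)
  exact le_of_tendsto' ((tendsto_euler_sin_prod t).comp (tendsto_add_atTop_nat 1)) hpartial

theorem sin_pi_mul_sq_div_le_one_sub_sq {t : ℝ} (ht₀ : 0 ≤ t) (ht₁ : t ≤ 1) :
    sin (π * t) ^ 2 / ((π * t) ^ 2 * (1 - t ^ 2)) ≤ 1 - t ^ 2 := by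
  have hsin₀ : 0 ≤ sin (π * t) :=
    sin_nonneg_of_nonneg_of_le_pi (by positivity) (by nlinarith [pi_pos])
  have hsin := sin_pi_mul_le_mul_one_sub_sq ht₀ ht₁
  have h1t : 0 ≤ 1 - t ^ 2 := by nlinarith
  refine div_le_of_le_mul₀ (by positivity) h1t ?_
  calc sin (π * t) ^ 2 ≤ (π * t * (1 - t ^ 2)) ^ 2 := pow_le_pow_left₀ hsin₀ hsin 2
    _ = (1 - t ^ 2) * ((π * t) ^ 2 * (1 - t ^ 2)) := by ring

end Real

theorem pow_le_of_le_rpow_one_div {d c : ℝ} {n : ℕ} (hn : n ≠ 0) (hd : 0 ≤ d) (hc : 0 ≤ c)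
    (h : d ≤ c ^ ((1 : ℝ) / n)) : d ^ n ≤ c := by
  rw [one_div, le_rpow_inv_iff_of_pos hd hc (by positivity)] at h
  exact_mod_cast h

theorem sub_sin_mul_le_two_pi_mul_div_sq {d x : ℝ} (hd : 0 < d) (hd₆ : d ^ 6 ≤ 12 * π)
    (hx : 0 ≤ x) (hxd : x ≤ d) :
    d * x - sin (d * x) ≤ 2 * π * (x / d) ^ 2 := by
  have hd₅x : d ^ 5 * x ≤ 12 * π := by
    calc d ^ 5 * x ≤ d ^ 5 * d := mul_le_mul_of_nonneg_left hxd (by positivity)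
      _ = d ^ 6 := by ring
      _ ≤ 12 * π := hd₆
  calc d * x - sin (d * x) ≤ (d * x) ^ 3 / 6 := by
        linarith [sin_ge_sub_cube (by positivity : 0 ≤ d * x)]
    _ = d ^ 5 * x * (x / d) ^ 2 / 6 := by field_simp
    _ ≤ 12 * π * (x / d) ^ 2 / 6 := by gcongr
    _ = 2 * π * (x / d) ^ 2 := by ring

/-- The N = 1/2 Levenshtein supremum inequality (Appendix D): for
`0 < d ≤ (12π)^{1/6}` and `0 < x < d`, the quotient of the one-dimensional
Levenshtein function and its Fourier transform is maximized at the origin. -/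
theorem levenshtein_half_sup (d : ℝ) (hd : 0 < d) (hd' : d ≤ (12 * π) ^ ((1 : ℝ) / 6))
    (x : ℝ) (hx : 0 < x) (hxd : x < d) :
    Real.sin (π * x / d) ^ 2 / ((π * x / d) ^ 2 * (1 - (x / d) ^ 2)) ≤
      1 + (Real.sin (d * x) - d * x) / (2 * π) := by
  have ht₀ : 0 ≤ x / d := (div_pos hx hd).le
  have ht₁ : x / d ≤ 1 := (div_le_one hd).mpr hxd.le
  have hlhs := sin_pi_mul_sq_div_le_one_sub_sq ht₀ ht₁
  have hd₆ := pow_le_of_le_rpow_one_div (n := 6) (by norm_num) hd.le (by positivity) hd'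
  have hrhs := sub_sin_mul_le_two_pi_mul_div_sq hd hd₆ hx.le hxd.le
  have hrhs' : -(x / d) ^ 2 ≤ (sin (d * x) - d * x) / (2 * π) := by
    rw [le_div_iff₀ (by positivity)]
    linarith
  rw [mul_div_assoc]
  linarith
end
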